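/- Let A and B be n×n matrices over the tropical semiring such that both tropical products A^{n!}B^{n!} and B^{n!}A^{n!} are sign-nonsingular. Then for every index i, the (i,i) entries agree: [A^{n!}B^{n!}]_{ii} = [B^{n!}A^{n!}]_{ii}. -/

import Mathlib

/-- Tropical (min-plus) matrix product. -/
noncomputable def tropMul {l m o : Type*} [Fintype m] [Nonempty m]
    (A : Matrix l m ℝ) (B : Matrix m o ℝ) : Matrix l o ℝ :=
  fun i j => Finset.univ.inf' Finset.univ_nonempty fun t => A i t + B t j

/-- Evaluation of a word over `{x, y}` (here `true` stands for `x`, `false` for `y`)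
as a tropical matrix product; the empty word evaluates to the junk value `A`. -/
noncomputable def evalWord {n : ℕ} [NeZero n] (A B : Matrix (Fin n) (Fin n) ℝ) :
    List Bool → Matrix (Fin n) (Fin n) ℝ
  | [] => A
  | b :: t => t.foldl (fun M c => tropMul M (cond c A B)) (cond b A B)

/-- Tropical matrix power (`tropPow A k` is `A^k` for `k ≥ 1`; `A^0` is junk `= A`). -/
noncomputable def tropPow {n : ℕ} [NeZero n] (A : Matrix (Fin n) (Fin n) ℝ) (k : ℕ) :
    Matrix (Fin n) (Fin n) ℝ :=
  evalWord A A (List.replicate k true)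

/-- Tropical permanent. -/
noncomputable def tropPerm {n : ℕ} (A : Matrix (Fin n) (Fin n) ℝ) : ℝ :=
  Finset.univ.inf' Finset.univ_nonempty fun σ : Equiv.Perm (Fin n) => ∑ i, A i (σ i)

/-- `Σ(A)`: the set of permutations attaining the tropical permanent. -/
def minPerms {n : ℕ} (A : Matrix (Fin n) (Fin n) ℝ) : Set (Equiv.Perm (Fin n)) :=
  { σ | ∑ i, A i (σ i) = tropPerm A }

/-- A matrix is sign-nonsingular if all permutations in `Σ(A)` have the same parity. -/
def SignNonsingular {n : ℕ} (A : Matrix (Fin n) (Fin n) ℝ) : Prop :=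
  ∀ σ ∈ minPerms A, ∀ τ ∈ minPerms A, Equiv.Perm.sign σ = Equiv.Perm.sign τ

/-- A matrix is sign-singular if `Σ(A)` contains two permutations of different parity. -/
def SignSingular {n : ℕ} (A : Matrix (Fin n) (Fin n) ℝ) : Prop :=
  ∃ σ ∈ minPerms A, ∃ τ ∈ minPerms A, Equiv.Perm.sign σ ≠ Equiv.Perm.sign τ

/-- Similarity transformation determined by `s`. -/
def simTrans {n : ℕ} (s : Fin n → ℝ) (C : Matrix (Fin n) (Fin n) ℝ) :
    Matrix (Fin n) (Fin n) ℝ :=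
  fun i j => C i j + s i - s j

/-- Diagonally `H`-dominant matrix. -/
def DiagDominant {n : ℕ} (H : ℝ) (A : Matrix (Fin n) (Fin n) ℝ) : Prop :=
  ∀ i j, A i j ≥ max (A i i) (A j j) + H * |A i i - A j j|

/-- Diagonally `H`-dominant pair of matrices. -/
def DiagDomPair {n : ℕ} (H : ℝ) (A B : Matrix (Fin n) (Fin n) ℝ) : Prop :=
  (∀ i, A i i = B i i) ∧ DiagDominant H (fun i j => min (A i j) (B i j))

/-!
Write `w(M, σ) = ∑ᵢ M i (σ i)`. If `c` is such that every permutation of weight below `c` is weakly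
beaten by one of the opposite sign, then for a sign-nonsingular `M` we get `c ≤ perm M`. This
property multiplies: an optimal choice of intermediate indices for `w(XY, σ)` either factors `σ` as
`π ∘ ρ`, or has a collision, and swapping the two colliding rows flips the sign without increasing
the weight. Hence `C = A^{n!} B^{n!}` has `perm C ≥ n! perm A + n! perm B`. On the other hand,
walking along an optimal permutation `p` of `A`, with `p^{n!} = 1`, gives `tr A^{n!} ≤ n! perm A`.
So `tr C ≤ tr A^{n!} + tr B^{n!} ≤ perm C ≤ tr C`, and the entrywise bound
`C i i ≤ A^{n!} i i + B^{n!} i i` is an equality; this expression is symmetric in `A` and `B`.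
-/

open Finset Equiv
open scoped Nat

section General

variable {ι : Type*} [Fintype ι]

def permWeight (M : Matrix ι ι ℝ) (σ : Perm ι) : ℝ :=
  ∑ i, M i (σ i)

variable [DecidableEq ι]

def PermLowerBoundModSign (M : Matrix ι ι ℝ) (c : ℝ) : Prop :=
  ∀ σ : Perm ι, c ≤ permWeight M σ ∨
    ∃ τ : Perm ι, Perm.sign τ ≠ Perm.sign σ ∧ permWeight M τ ≤ permWeight M σ

variable [Nonempty ι]

omit [DecidableEq ι] in
lemma tropMul_le (X Y : Matrix ι ι ℝ) (i j t : ι) : tropMul X Y i j ≤ X i t + Y t j :=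
  inf'_le _ (mem_univ t)

omit [DecidableEq ι] in
lemma exists_tropMul_eq (X Y : Matrix ι ι ℝ) (i j : ι) :
    ∃ t, tropMul X Y i j = X i t + Y t j := by
  obtain ⟨t, -, h⟩ := exists_mem_eq_inf' univ_nonempty fun t => X i t + Y t j
  exact ⟨t, h⟩

omit [DecidableEq ι] in
lemma permWeight_tropMul_trans_le (X Y : Matrix ι ι ℝ) (ρ π : Perm ι) :
    permWeight (tropMul X Y) (ρ.trans π) ≤ permWeight X ρ + permWeight Y π :=
  calc permWeight (tropMul X Y) (ρ.trans π) ≤ ∑ i, (X i (ρ i) + Y (ρ i) (π (ρ i))) :=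
        sum_le_sum fun i _ => tropMul_le X Y i _ (ρ i)
    _ = permWeight X ρ + permWeight Y π := by
        rw [sum_add_distrib, permWeight, permWeight, Equiv.sum_comp ρ fun t => Y t (π t)]

lemma permWeight_tropMul_factor_or_flip (X Y : Matrix ι ι ℝ) (σ : Perm ι) :
    (∃ ρ π : Perm ι, ρ.trans π = σ ∧
        permWeight (tropMul X Y) σ = permWeight X ρ + permWeight Y π) ∨
      ∃ τ : Perm ι, Perm.sign τ ≠ Perm.sign σ ∧
        permWeight (tropMul X Y) τ ≤ permWeight (tropMul X Y) σ := by
  choose f hf using fun i => exists_tropMul_eq X Y i (σ i)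
  have hσ : permWeight (tropMul X Y) σ = ∑ i, X i (f i) + ∑ i, Y (f i) (σ i) := by
    rw [permWeight, ← sum_add_distrib]
    exact sum_congr rfl fun i _ => hf i
  by_cases hinj : Function.Injective f
  · left
    set ρ := Equiv.ofBijective f (Finite.injective_iff_bijective.mp hinj)
    refine ⟨ρ, ρ.symm.trans σ, by ext; simp, ?_⟩
    rw [hσ, permWeight, permWeight, ← Equiv.sum_comp ρ fun t => Y t ((ρ.symm.trans σ) t)]
    simp [ρ]
  · right
    obtain ⟨a, b, hfab, hab⟩ := Function.not_injective_iff.mp hinj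
    have hfswap : ∀ i, f (swap a b i) = f i := by
      intro i
      rcases eq_or_ne i a with rfl | hia
      · simp [hfab]
      rcases eq_or_ne i b with rfl | hib
      · simp [hfab]
      rw [swap_apply_of_ne_of_ne hia hib]
    refine ⟨σ * swap a b, ?_, ?_⟩
    · rw [Perm.sign_mul, Perm.sign_swap hab, mul_neg_one]
      exact neg_units_ne_self _
    · calc permWeight (tropMul X Y) (σ * swap a b)
          ≤ ∑ i, (X i (f i) + Y (f (swap a b i)) (σ (swap a b i))) :=
            sum_le_sum fun i _ => by rw [hfswap]; exact tropMul_le X Y i _ (f i)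
        _ = permWeight (tropMul X Y) σ := by
            rw [sum_add_distrib, Equiv.sum_comp (swap a b) fun i => Y (f i) (σ i), hσ]

lemma PermLowerBoundModSign.tropMul {X Y : Matrix ι ι ℝ} {a b : ℝ}
    (hX : PermLowerBoundModSign X a) (hY : PermLowerBoundModSign Y b) :
    PermLowerBoundModSign (_root_.tropMul X Y) (a + b) := by
  intro σ
  obtain ⟨ρ, π, rfl, hw⟩ | hflip := permWeight_tropMul_factor_or_flip X Y σ
  · rcases hX ρ with hρ | ⟨τ, hτ, hτw⟩
    · rcases hY π with hπ | ⟨τ', hτ', hτ'w⟩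
      · exact Or.inl (by linarith)
      · refine Or.inr ⟨ρ.trans τ', by simpa [Perm.sign_trans] using hτ', ?_⟩
        linarith [permWeight_tropMul_trans_le X Y ρ τ']
    · refine Or.inr ⟨τ.trans π, by simpa [Perm.sign_trans] using hτ, ?_⟩
      linarith [permWeight_tropMul_trans_le X Y τ π]
  · exact Or.inr hflip

end General

section Square

variable {n : ℕ}

lemma tropPerm_le (M : Matrix (Fin n) (Fin n) ℝ) (σ : Perm (Fin n)) :
    tropPerm M ≤ permWeight M σ :=
  inf'_le _ (mem_univ σ)

lemma exists_permWeight_eq_tropPerm (M : Matrix (Fin n) (Fin n) ℝ) :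
    ∃ σ, permWeight M σ = tropPerm M := by
  obtain ⟨σ, -, h⟩ := exists_mem_eq_inf' univ_nonempty fun σ : Perm (Fin n) => permWeight M σ
  exact ⟨σ, h.symm⟩

lemma permLowerBoundModSign_tropPerm (M : Matrix (Fin n) (Fin n) ℝ) :
    PermLowerBoundModSign M (tropPerm M) :=
  fun σ => Or.inl (tropPerm_le M σ)

lemma SignNonsingular.le_tropPerm {M : Matrix (Fin n) (Fin n) ℝ} {c : ℝ}
    (hM : SignNonsingular M) (hc : PermLowerBoundModSign M c) : c ≤ tropPerm M := by
  obtain ⟨σ, hσ⟩ := exists_permWeight_eq_tropPerm M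
  rcases hc σ with hcσ | ⟨τ, hτ, hτw⟩
  · exact hσ ▸ hcσ
  · have hτmin : τ ∈ minPerms M := le_antisymm (hσ ▸ hτw) (tropPerm_le M τ)
    exact absurd (hM τ hτmin σ hσ) hτ

variable [NeZero n]

lemma tropPow_one (A : Matrix (Fin n) (Fin n) ℝ) : tropPow A 1 = A :=
  rfl

lemma tropPow_succ (A : Matrix (Fin n) (Fin n) ℝ) {k : ℕ} (hk : 0 < k) :
    tropPow A (k + 1) = tropMul (tropPow A k) A := by
  obtain ⟨m, rfl⟩ : ∃ m, k = m + 1 := ⟨k - 1, by omega⟩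
  change evalWord A A (true :: List.replicate (m + 1) true) =
    tropMul (evalWord A A (true :: List.replicate m true)) A
  rw [evalWord, evalWord, List.replicate_succ', List.foldl_append]
  rfl

lemma permWeight_tropPow_pow_le (A : Matrix (Fin n) (Fin n) ℝ) (p : Perm (Fin n)) {k : ℕ}
    (hk : 0 < k) : permWeight (tropPow A k) (p ^ k) ≤ k * permWeight A p := by
  induction k, hk using Nat.le_induction with
  | base => simp [tropPow_one]
  | succ k hk ih =>
    rw [tropPow_succ A hk, pow_succ', Perm.mul_def]
    have := permWeight_tropMul_trans_le (tropPow A k) A (p ^ k) p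
    push_cast
    linarith

lemma sum_tropPow_factorial_diag_le (A : Matrix (Fin n) (Fin n) ℝ) :
    ∑ i, tropPow A n ! i i ≤ n ! * tropPerm A := by
  obtain ⟨p, hp⟩ := exists_permWeight_eq_tropPerm A
  have hp_pow : p ^ n ! = 1 := by
    simpa [Fintype.card_perm] using pow_card_eq_one (x := p)
  have h := permWeight_tropPow_pow_le A p n.factorial_pos
  rwa [hp_pow, hp] at h

lemma permLowerBoundModSign_tropPow (A : Matrix (Fin n) (Fin n) ℝ) {k : ℕ} (hk : 0 < k) :
    PermLowerBoundModSign (tropPow A k) (k * tropPerm A) := by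
  induction k, hk using Nat.le_induction with
  | base => simpa [tropPow_one] using permLowerBoundModSign_tropPerm A
  | succ k hk ih =>
    rw [tropPow_succ A hk]
    convert ih.tropMul (permLowerBoundModSign_tropPerm A) using 1
    push_cast
    ring

lemma tropMul_tropPow_factorial_diag (A B : Matrix (Fin n) (Fin n) ℝ)
    (h : SignNonsingular (tropMul (tropPow A n !) (tropPow B n !))) (i : Fin n) :
    tropMul (tropPow A n !) (tropPow B n !) i i = tropPow A n ! i i + tropPow B n ! i i := by
  set C := tropMul (tropPow A n !) (tropPow B n !)
  have hle : ∀ j, C j j ≤ tropPow A n ! j j + tropPow B n ! j j := fun j => tropMul_le _ _ j j j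
  have hC : (n ! : ℝ) * tropPerm A + n ! * tropPerm B ≤ tropPerm C :=
    h.le_tropPerm <| (permLowerBoundModSign_tropPow A n.factorial_pos).tropMul
      (permLowerBoundModSign_tropPow B n.factorial_pos)
  have htrace : ∑ j, (tropPow A n ! j j + tropPow B n ! j j) ≤ ∑ j, C j j :=
    calc ∑ j, (tropPow A n ! j j + tropPow B n ! j j)
        = ∑ j, tropPow A n ! j j + ∑ j, tropPow B n ! j j := sum_add_distrib
      _ ≤ n ! * tropPerm A + n ! * tropPerm B :=
          add_le_add (sum_tropPow_factorial_diag_le A) (sum_tropPow_factorial_diag_le B)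
      _ ≤ tropPerm C := hC
      _ ≤ ∑ j, C j j := tropPerm_le C 1
  exact (sum_eq_sum_iff_of_le fun j _ => hle j).mp
    (le_antisymm (sum_le_sum fun j _ => hle j) htrace) i (mem_univ i)

end Square

/-- If `A^{n!}B^{n!}` and `B^{n!}A^{n!}` are sign-nonsingular then
their diagonal entries agree. -/
theorem stmt4 {n : ℕ} [NeZero n] (A B : Matrix (Fin n) (Fin n) ℝ)
    (h₁ : SignNonsingular (tropMul (tropPow A (Nat.factorial n)) (tropPow B (Nat.factorial n))))
    (h₂ : SignNonsingular (tropMul (tropPow B (Nat.factorial n)) (tropPow A (Nat.factorial n))))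
    (i : Fin n) :
    tropMul (tropPow A (Nat.factorial n)) (tropPow B (Nat.factorial n)) i i =
      tropMul (tropPow B (Nat.factorial n)) (tropPow A (Nat.factorial n)) i i := by
  rw [tropMul_tropPow_factorial_diag A B h₁ i, tropMul_tropPow_factorial_diag B A h₂ i, add_comm]
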